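/- Let Φ : M_n(ℂ) → M_n(ℂ) be given by Φ(a) = Σ_k x_k* a x_k with Σ_k x_k* x_k = 1 and Σ_k x_k x_k* ≤ 1. If p is an orthogonal projection with Φ(p) = p, then p x_k (1 − p) = 0 and (1 − p) x_k p = 0 for every k; hence p commutes with every x_k. -/

import Mathlib

open Matrix ComplexOrder

lemma psd_trace_nonneg {N : ℕ} {A : Matrix (Fin N) (Fin N) ℂ}
    (h : A.PosSemidef) : 0 ≤ A.trace := by
  obtain ⟨B, rfl⟩ : ∃ B : Matrix (Fin N) (Fin N) ℂ, A = Bᴴ * B := by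
    open scoped MatrixOrder Matrix.Norms.L2Operator in
    exact CStarAlgebra.nonneg_iff_eq_star_mul_self.mp h.nonneg
  rw [Matrix.trace]
  refine Finset.sum_nonneg fun i _ => ?_
  simp only [Matrix.diag_apply, Matrix.mul_apply, Matrix.conjTranspose_apply]
  exact Finset.sum_nonneg fun j _ => star_mul_self_nonneg _

lemma psd_trace_zero {N : ℕ} {A : Matrix (Fin N) (Fin N) ℂ}
    (h : A.PosSemidef) (ht : A.trace = 0) : A = 0 := by
  obtain ⟨B, rfl⟩ : ∃ B : Matrix (Fin N) (Fin N) ℂ, A = Bᴴ * B := by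
    open scoped MatrixOrder Matrix.Norms.L2Operator in
    exact CStarAlgebra.nonneg_iff_eq_star_mul_self.mp h.nonneg
  suffices hB : B = 0 by simp [hB]
  rw [Matrix.trace] at ht
  have hterm : ∀ i ∈ Finset.univ, (0:ℂ) ≤ (Bᴴ * B).diag i := by
    intro i _
    simp only [Matrix.diag_apply, Matrix.mul_apply, Matrix.conjTranspose_apply]
    exact Finset.sum_nonneg fun j _ => star_mul_self_nonneg _
  have := (Finset.sum_eq_zero_iff_of_nonneg hterm).mp ht
  ext i j
  have hi := this j (Finset.mem_univ j)
  simp only [Matrix.diag_apply, Matrix.mul_apply, Matrix.conjTranspose_apply] at hi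
  have h2 := (Finset.sum_eq_zero_iff_of_nonneg (fun k _ => star_mul_self_nonneg (B k j))).mp hi
  have := h2 i (Finset.mem_univ i)
  rcases mul_eq_zero.mp this with h | h
  · simpa using star_eq_zero.mp h
  · simpa using h

lemma sum_psd_eq_zero {N m : ℕ} {f : Fin m → Matrix (Fin N) (Fin N) ℂ}
    (h : ∀ k, (f k).PosSemidef) (hs : ∑ k, f k = 0) : ∀ k, f k = 0 := by
  have ht : ∑ k, (f k).trace = 0 := by
    rw [← Matrix.trace_sum, hs, Matrix.trace_zero]
  have := (Finset.sum_eq_zero_iff_of_nonneg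
    (fun k _ => psd_trace_nonneg (h k))).mp ht
  exact fun k => psd_trace_zero (h k) (this k (Finset.mem_univ k))

lemma sum_posSemidef {N m : ℕ} (f : Fin m → Matrix (Fin N) (Fin N) ℂ)
    (h : ∀ k, (f k).PosSemidef) : (∑ k, f k).PosSemidef := by
  classical
  refine Finset.sum_induction f _ (fun a b ha hb => ha.add hb) ?_ (fun k _ => h k)
  exact Matrix.PosSemidef.zero

/-- If Φ(p) = p for a projection p, where Φ(a) = Σ_k x_kᴴ a x_k with
Σ_k x_kᴴ x_k = 1 and Σ_k x_k x_kᴴ ≤ 1, then p x_k (1−p) = 0 and (1−p) x_k p = 0,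
hence p commutes with every x_k. -/
theorem projection_fixed_point_commutes {n m : ℕ}
    (x : Fin m → Matrix (Fin n) (Fin n) ℂ)
    (hx1 : ∑ k, (x k)ᴴ * x k = 1)
    (hx2 : (1 - ∑ k, x k * (x k)ᴴ).PosSemidef)
    (p : Matrix (Fin n) (Fin n) ℂ) (hp1 : p = pᴴ) (hp2 : p * p = p)
    (hfix : ∑ k, (x k)ᴴ * p * x k = p) :
    ∀ k, p * x k * (1 - p) = 0 ∧ (1 - p) * x k * p = 0 ∧ p * x k = x k * p := by
  have hq1 : (1 - p)ᴴ = 1 - p := by rw [conjTranspose_sub, conjTranspose_one, ← hp1]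
  have hq2 : (1 - p) * (1 - p) = 1 - p := by
    rw [sub_mul, mul_sub, mul_sub, one_mul, mul_one, hp2]; noncomm_ring
  -- Step 1 : (1-p) x_k p = 0
  have key1 : ∀ k, ((1-p) * x k * p)ᴴ * ((1-p) * x k * p)
      = p * ((x k)ᴴ * x k) * p - p * ((x k)ᴴ * p * x k) * p := by
    intro k
    calc ((1-p) * x k * p)ᴴ * ((1-p) * x k * p)
        = pᴴ * ((x k)ᴴ * (((1-p)ᴴ * (1-p)) * (x k * p))) := by
          simp only [conjTranspose_mul, mul_assoc]
      _ = p * ((x k)ᴴ * ((1 - p) * (x k * p))) := by rw [hq1, hq2, ← hp1]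
      _ = p * ((x k)ᴴ * x k) * p - p * ((x k)ᴴ * p * x k) * p := by
          simp only [sub_mul, mul_sub, one_mul, mul_assoc]
  have hS : ∑ k, ((1-p) * x k * p)ᴴ * ((1-p) * x k * p) = 0 := by
    simp only [key1]
    rw [Finset.sum_sub_distrib, ← Finset.sum_mul, ← Finset.sum_mul,
      ← Finset.mul_sum, ← Finset.mul_sum, hx1, hfix, mul_one, hp2, hp2, sub_self]
  have step1 : ∀ k, (1-p) * x k * p = 0 := fun k =>
    conjTranspose_mul_self_eq_zero.mp
      (sum_psd_eq_zero (fun k => posSemidef_conjTranspose_mul_self _) hS k)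
  have hxp : ∀ k, x k * p = p * (x k * p) := by
    intro k
    have h := step1 k
    rw [sub_mul, sub_mul, one_mul, sub_eq_zero, mul_assoc] at h
    exact h
  -- Step 2 : Ψ(p) = p where Ψ(a) = Σ_k x_k a x_kᴴ
  set Y : Matrix (Fin n) (Fin n) ℂ := ∑ k, x k * p * (x k)ᴴ with hYdef
  set W : Matrix (Fin n) (Fin n) ℂ := ∑ k, x k * (x k)ᴴ with hWdef
  have hterm : ∀ k, x k * p * (x k)ᴴ = (x k * p) * (x k * p)ᴴ := by
    intro k
    have hpp : p * (p * (x k)ᴴ) = p * (x k)ᴴ := by rw [← mul_assoc, hp2]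
    rw [conjTranspose_mul, ← hp1]
    simp only [mul_assoc, hpp]
  have hY : p * Y * p = Y := by
    rw [hYdef, Finset.mul_sum, Finset.sum_mul]
    refine Finset.sum_congr rfl fun k _ => ?_
    calc p * (x k * p * (x k)ᴴ) * p
        = (p * (x k * p)) * ((p * (x k * p))ᴴ) := by
          rw [conjTranspose_mul, conjTranspose_mul, ← hp1]
          have hpp2 : p * (p * ((x k)ᴴ * p)) = p * ((x k)ᴴ * p) := by
            rw [← mul_assoc, hp2]
          simp only [mul_assoc, hpp2]
      _ = (x k * p) * (x k * p)ᴴ := by rw [← hxp]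
      _ = x k * p * (x k)ᴴ := (hterm k).symm
  have htrY : Y.trace = p.trace := by
    rw [hYdef, Matrix.trace_sum]
    have : ∀ k, (x k * p * (x k)ᴴ).trace = ((x k)ᴴ * x k * p).trace := by
      intro k; rw [Matrix.trace_mul_cycle]
    simp only [this]
    rw [← Matrix.trace_sum, ← Finset.sum_mul, hx1, one_mul]
  have he : ∀ k, (p * (x k * (1-p))) * (p * (x k * (1-p)))ᴴ
      = p * (x k * (x k)ᴴ) * p - p * (x k * p * (x k)ᴴ) * p := by
    intro k
    calc (p * (x k * (1-p))) * (p * (x k * (1-p)))ᴴ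
        = p * (x k * ((1-p) * ((1-p)ᴴ * ((x k)ᴴ * pᴴ)))) := by
          simp only [conjTranspose_mul, mul_assoc]
      _ = p * (x k * ((1-p) * ((x k)ᴴ * p))) := by
          rw [hq1, ← hp1, ← mul_assoc (1-p) (1-p), hq2]
      _ = p * (x k * (x k)ᴴ) * p - p * (x k * p * (x k)ᴴ) * p := by
          simp only [sub_mul, mul_sub, one_mul, mul_one, mul_assoc]
  have hsum_he : ∑ k, (p * (x k * (1-p))) * (p * (x k * (1-p)))ᴴ
      = p * W * p - p * Y * p := by
    simp only [he]
    rw [Finset.sum_sub_distrib, hWdef, hYdef, ← Finset.sum_mul, ← Finset.sum_mul,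
      ← Finset.mul_sum, ← Finset.mul_sum]
  have hPSD1 : (p * (1 - W) * p).PosSemidef := by
    have := hx2.mul_mul_conjTranspose_same p
    rwa [← hp1] at this
  have hPSD2 : (∑ k, (p * (x k * (1-p))) * (p * (x k * (1-p)))ᴴ).PosSemidef :=
    sum_posSemidef _ fun k => posSemidef_self_mul_conjTranspose _
  have hPY : (p - Y).PosSemidef := by
    have heq : p - Y
        = p * (1 - W) * p + ∑ k, (p * (x k * (1-p))) * (p * (x k * (1-p)))ᴴ := by
      rw [hsum_he, hY]
      simp only [mul_sub, sub_mul, mul_one, one_mul, hp2]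
      abel
    rw [heq]; exact hPSD1.add hPSD2
  have hYp : Y = p := by
    have h0 : p - Y = 0 := psd_trace_zero hPY (by rw [Matrix.trace_sub, htrY, sub_self])
    exact (sub_eq_zero.mp h0).symm
  -- Step 3 : p x_k (1-p) = 0
  have hTval : ∑ k, (p * (x k * (1-p))) * (p * (x k * (1-p)))ᴴ = p * W * p - p := by
    rw [hsum_he, hY, hYp]
  have hneg : p * (1 - W) * p = -(p * W * p - p) := by
    simp only [mul_sub, sub_mul, mul_one, one_mul, hp2]
    abel
  have htr0 : (∑ k, (p * (x k * (1-p))) * (p * (x k * (1-p)))ᴴ).trace = 0 := by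
    refine le_antisymm ?_ (psd_trace_nonneg hPSD2)
    have h2t := psd_trace_nonneg hPSD1
    rw [hneg, ← hTval, Matrix.trace_neg] at h2t
    exact neg_nonneg.mp h2t
  have hT0 : ∑ k, (p * (x k * (1-p))) * (p * (x k * (1-p)))ᴴ = 0 :=
    psd_trace_zero hPSD2 htr0
  have step3 : ∀ k, p * x k * (1-p) = 0 := by
    intro k
    have h := self_mul_conjTranspose_eq_zero.mp
      (sum_psd_eq_zero (fun k => posSemidef_self_mul_conjTranspose _) hT0 k)
    rw [mul_assoc]
    exact h
  -- Conclusion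
  intro k
  refine ⟨step3 k, step1 k, ?_⟩
  have h1 : p * x k = p * x k * p := by
    have h := step3 k
    rw [mul_sub, mul_one, sub_eq_zero] at h
    exact h
  have h2 : x k * p = p * x k * p := (hxp k).trans (mul_assoc p (x k) p).symm
  rw [h1, h2]
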